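/- With the Labastida operator $\mathsf{F}=\Box - d_i d_i^\dagger + \tfrac12 d_i d_j\mathrm{Tr}_{ij}$ acting on multiforms, the gauge variation of the Labastida tensor under $\delta\phi = \sum_{k=1}^{s} d_k\epsilon_k$ is given by $\mathsf{F}(d_k\epsilon_k) = \tfrac12\, d_i d_j d_k\,(\mathrm{Tr}_{ij}\epsilon_k) + d_k(\mathsf{F}'\epsilon_k)$ with all terms not proportional to triple curls of traces canceling; in particular, if $\mathrm{Tr}_{(ij}\epsilon_{k)}=0$ (symmetrization over the three labels) then $\mathsf{F}(\sum_k d_k\epsilon_k)$ projects to zero under the Young symmetrizer, i.e. the Labastida field equation $\mathbf{Y}_A\mathsf{F}\phi=0$ is gauge invariant under parameters satisfying the tracelessness constraint $\mathrm{Tr}_{(ij}\epsilon_{k)}=0$. -/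
import Mathlib


namespace Stmt10

/-- exterior derivative `dᵢ = θᵢ^μ ∂_μ` -/
def dOp {R : Type*} [Ring R] {D s : ℕ}
    (θ : Fin s → Fin D → R) (der : Fin D → R) (i : Fin s) : R :=
  ∑ μ : Fin D, θ i μ * der μ

/-- coderivative `dᵢ† = θ̄ᵢ^μ ∂_μ` -/
def ddOp {R : Type*} [Ring R] {D s : ℕ}
    (θb : Fin s → Fin D → R) (der : Fin D → R) (i : Fin s) : R :=
  ∑ μ : Fin D, θb i μ * der μ

/-- trace operator `Tr_{ij} = η_{μν} θ̄ᵢ^μ θ̄ⱼ^ν`, extended by `Tr_{ii} := 0` -/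
def trOp' {R : Type*} [Ring R] [Algebra ℝ R] {D s : ℕ}
    (ηlow : Fin D → Fin D → ℝ) (θb : Fin s → Fin D → R) (i j : Fin s) : R :=
  if i = j then 0 else ∑ μ : Fin D, ∑ ν : Fin D, ηlow μ ν • (θb i μ * θb j ν)

/-- d'Alembertian `□ = η^{μν} ∂_μ ∂_ν` -/
def boxOp {R : Type*} [Ring R] [Algebra ℝ R] {D : ℕ}
    (ηup : Fin D → Fin D → ℝ) (der : Fin D → R) : R :=
  ∑ μ : Fin D, ∑ ν : Fin D, ηup μ ν • (der μ * der ν)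

/-- Labastida operator `𝖥 = □ − dᵢ dᵢ† + ½ dᵢ dⱼ Tr_{ij}`. -/
noncomputable def labOp {R : Type*} [Ring R] [Algebra ℝ R] {D s : ℕ}
    (ηup ηlow : Fin D → Fin D → ℝ) (θ θb : Fin s → Fin D → R) (der : Fin D → R) : R :=
  boxOp ηup der - (∑ i : Fin s, dOp θ der i * ddOp θb der i)
    + (2 : ℝ)⁻¹ • (∑ i : Fin s, ∑ j : Fin s, dOp θ der i * dOp θ der j * trOp' ηlow θb i j)

structure Ctx (R : Type*) [Ring R] [Algebra ℝ R] (D s : ℕ) where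
  ηup : Fin D → Fin D → ℝ
  ηlow : Fin D → Fin D → ℝ
  θ : Fin s → Fin D → R
  θb : Fin s → Fin D → R
  der : Fin D → R
  hη_symm : ∀ μ ν, ηup μ ν = ηup ν μ
  hη_inv : ∀ μ ν, (∑ lam : Fin D, ηup μ lam * ηlow lam ν) = if μ = ν then 1 else 0
  h_mixed_same : ∀ (i : Fin s) (μ ν : Fin D),
      θ i μ * θb i ν + θb i ν * θ i μ = algebraMap ℝ R (ηup μ ν)
  h_mixed_diff : ∀ (i j : Fin s), i ≠ j → ∀ (μ ν : Fin D),
      θ i μ * θb j ν = θb j ν * θ i μ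
  h_θθ_same : ∀ (i : Fin s) (μ ν : Fin D), θ i μ * θ i ν = -(θ i ν * θ i μ)
  h_θθ_diff : ∀ (i j : Fin s), i ≠ j → ∀ (μ ν : Fin D), θ i μ * θ j ν = θ j ν * θ i μ
  h_θbθb_same : ∀ (i : Fin s) (μ ν : Fin D), θb i μ * θb i ν = -(θb i ν * θb i μ)
  h_θbθb_diff : ∀ (i j : Fin s), i ≠ j → ∀ (μ ν : Fin D), θb i μ * θb j ν = θb j ν * θb i μ
  h_der_comm : ∀ μ ν, der μ * der ν = der ν * der μ
  h_der_θ : ∀ (i : Fin s) (μ ν : Fin D), der μ * θ i ν = θ i ν * der μ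
  h_der_θb : ∀ (i : Fin s) (μ ν : Fin D), der μ * θb i ν = θb i ν * der μ

lemma smul_cancel' {R : Type*} [Ring R] [Algebra ℝ R] (a : ℝ) (ha : a ≠ 0) {x : R}
    (h : a • x = 0) : x = 0 := by
  have := congrArg (fun y => a⁻¹ • y) h
  simpa [smul_smul, inv_mul_cancel₀ ha] using this

lemma half_cancel' {R : Type*} [Ring R] [Algebra ℝ R] {x : R} (h : x + x = 0) : x = 0 := by
  apply smul_cancel' (2:ℝ) (by norm_num)
  rw [two_smul]; exact h

lemma sum_rot {α M : Type*} [Fintype α] [AddCommMonoid M] (f : α → α → α → M) :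
    (∑ a : α, ∑ b : α, ∑ e : α, f a b e) = ∑ a : α, ∑ b : α, ∑ e : α, f e a b := by
  rw [Finset.sum_comm]
  exact Finset.sum_congr rfl fun _ _ => Finset.sum_comm

lemma sum_swap12 {α M : Type*} [Fintype α] [AddCommMonoid M] (f : α → α → α → M) :
    (∑ a : α, ∑ b : α, ∑ e : α, f a b e) = ∑ a : α, ∑ b : α, ∑ e : α, f b a e :=
  Finset.sum_comm

lemma sum_swap23 {α M : Type*} [Fintype α] [AddCommMonoid M] (f : α → α → α → M) :
    (∑ a : α, ∑ b : α, ∑ e : α, f a b e) = ∑ a : α, ∑ b : α, ∑ e : α, f a e b :=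
  Finset.sum_congr rfl fun _ _ => Finset.sum_comm

namespace Ctx

variable {R : Type*} [Ring R] [Algebra ℝ R] {D s : ℕ} (c : Ctx R D s)

noncomputable def d (i : Fin s) : R := dOp c.θ c.der i
noncomputable def dd (i : Fin s) : R := ddOp c.θb c.der i
noncomputable def tr (i j : Fin s) : R := trOp' c.ηlow c.θb i j
noncomputable def box : R := boxOp c.ηup c.der

lemma regroup {a b e f : R} (h : b * e = e * b) : a*b*(e*f) = a*e*(b*f) := by
  rw [mul_assoc, ← mul_assoc b, h, mul_assoc, ← mul_assoc]

/-- d's pairwise commute (same index trivially). -/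
lemma comm_d_d (i j : Fin s) : c.d i * c.d j = c.d j * c.d i := by
  rcases eq_or_ne i j with rfl | h
  · rfl
  · have : Commute (c.d i) (c.d j) := by
      unfold Ctx.d dOp
      apply Commute.sum_left; intro μ _
      apply Commute.sum_right; intro ν _
      have h1 : Commute (c.θ i μ) (c.θ j ν) := c.h_θθ_diff i j h μ ν
      have h2 : Commute (c.der μ) (c.θ j ν) := c.h_der_θ j μ ν
      have h3 : Commute (c.θ i μ) (c.der ν) := (c.h_der_θ i ν μ).symm
      have h4 : Commute (c.der μ) (c.der ν) := c.h_der_comm μ ν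
      exact (h1.mul_left h2).mul_right (h3.mul_left h4)
    exact this

/-- dd_i commutes with d_k for i ≠ k. -/
lemma comm_dd_d {i k : Fin s} (h : i ≠ k) : c.dd i * c.d k = c.d k * c.dd i := by
  have : Commute (c.dd i) (c.d k) := by
    unfold Ctx.d Ctx.dd dOp ddOp
    apply Commute.sum_left; intro μ _
    apply Commute.sum_right; intro ν _
    have h1 : Commute (c.θb i μ) (c.θ k ν) := (c.h_mixed_diff k i (Ne.symm h) ν μ).symm
    have h2 : Commute (c.der μ) (c.θ k ν) := c.h_der_θ k μ ν
    have h3 : Commute (c.θb i μ) (c.der ν) := (c.h_der_θb i ν μ).symm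
    have h4 : Commute (c.der μ) (c.der ν) := c.h_der_comm μ ν
    exact (h1.mul_left h2).mul_right (h3.mul_left h4)
  exact this

/-- tr_{ij} commutes with d_k when k ∉ {i,j}. -/
lemma comm_tr_d {i j k : Fin s} (hi : k ≠ i) (hj : k ≠ j) :
    c.tr i j * c.d k = c.d k * c.tr i j := by
  rcases eq_or_ne i j with rfl | hij
  · show trOp' c.ηlow c.θb i i * c.d k = c.d k * trOp' c.ηlow c.θb i i
    rw [trOp', if_pos rfl, zero_mul, mul_zero]
  · have : Commute (c.tr i j) (c.d k) := by
      show Commute (trOp' c.ηlow c.θb i j) (c.d k)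
      rw [trOp', if_neg hij]
      unfold Ctx.d dOp
      apply Commute.sum_left; intro μ _
      apply Commute.sum_left; intro ν _
      apply Commute.smul_left
      apply Commute.sum_right; intro lam _
      have h1 : Commute (c.θb i μ) (c.θ k lam) := (c.h_mixed_diff k i hi lam μ).symm
      have h2 : Commute (c.θb j ν) (c.θ k lam) := (c.h_mixed_diff k j hj lam ν).symm
      have h3 : Commute (c.θb i μ) (c.der lam) := (c.h_der_θb i lam μ).symm
      have h4 : Commute (c.θb j ν) (c.der lam) := (c.h_der_θb j lam ν).symm
      exact (h1.mul_left h2).mul_right (h3.mul_left h4)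
    exact this

/-- box commutes with d_k. -/
lemma comm_box_d (k : Fin s) : c.box * c.d k = c.d k * c.box := by
  have : Commute c.box (c.d k) := by
    unfold Ctx.d Ctx.box dOp boxOp
    apply Commute.sum_left; intro μ _
    apply Commute.sum_left; intro ν _
    apply Commute.smul_left
    apply Commute.sum_right; intro lam _
    have h1 : Commute (c.der μ) (c.θ k lam) := c.h_der_θ k μ lam
    have h2 : Commute (c.der ν) (c.θ k lam) := c.h_der_θ k ν lam
    have h3 : Commute (c.der μ) (c.der lam) := c.h_der_comm μ lam
    have h4 : Commute (c.der ν) (c.der lam) := c.h_der_comm ν lam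
    exact (h1.mul_left h2).mul_right (h3.mul_left h4)
  exact this


lemma hη_inv' : ∀ μ ν, (∑ lam : Fin D, c.ηlow μ lam * c.ηup lam ν) = if μ = ν then 1 else 0 := by
  have hAB : (Matrix.of c.ηup : Matrix (Fin D) (Fin D) ℝ) * Matrix.of c.ηlow = 1 := by
    ext a b; simp [Matrix.mul_apply, Matrix.one_apply, c.hη_inv]
  have hBA := mul_eq_one_comm.mp hAB
  intro μ ν
  have := congrFun (congrFun hBA μ) ν
  simpa [Matrix.mul_apply, Matrix.one_apply] using this

lemma d_sq (i : Fin s) : c.d i * c.d i = 0 := by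
  have expand : c.d i * c.d i
      = ∑ μ : Fin D, ∑ ν : Fin D, (c.θ i μ * c.der μ) * (c.θ i ν * c.der ν) := by
    unfold Ctx.d dOp; rw [Finset.sum_mul_sum]
  have key : ∀ μ ν : Fin D, (c.θ i μ * c.der μ) * (c.θ i ν * c.der ν)
      = -((c.θ i ν * c.der ν) * (c.θ i μ * c.der μ)) := by
    intro μ ν
    rw [regroup (c.h_der_θ i μ ν), regroup (c.h_der_θ i ν μ)]
    rw [c.h_θθ_same i μ ν, c.h_der_comm μ ν, neg_mul]
  apply half_cancel'
  nth_rewrite 2 [expand]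
  rw [expand]
  have flip : (∑ μ : Fin D, ∑ ν : Fin D, (c.θ i μ * c.der μ) * (c.θ i ν * c.der ν))
      = -(∑ μ : Fin D, ∑ ν : Fin D, (c.θ i μ * c.der μ) * (c.θ i ν * c.der ν)) := by
    nth_rewrite 1 [Finset.sum_comm]
    calc (∑ ν : Fin D, ∑ μ : Fin D, (c.θ i μ * c.der μ) * (c.θ i ν * c.der ν))
        = ∑ ν : Fin D, ∑ μ : Fin D, -((c.θ i ν * c.der ν) * (c.θ i μ * c.der μ)) :=
          Finset.sum_congr rfl fun ν _ => Finset.sum_congr rfl fun μ _ => key μ ν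
      _ = -(∑ ν : Fin D, ∑ μ : Fin D, (c.θ i ν * c.der ν) * (c.θ i μ * c.der μ)) := by
          simp [Finset.sum_neg_distrib]
  nth_rewrite 1 [flip]
  simp

lemma anticomm (i : Fin s) : c.d i * c.dd i + c.dd i * c.d i = c.box := by
  have e1 : c.d i * c.dd i
      = ∑ μ : Fin D, ∑ ν : Fin D, (c.θ i μ * c.θb i ν) * (c.der μ * c.der ν) := by
    unfold Ctx.d Ctx.dd dOp ddOp; rw [Finset.sum_mul_sum]
    exact Finset.sum_congr rfl fun μ _ => Finset.sum_congr rfl fun ν _ =>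
      regroup (c.h_der_θb i μ ν)
  have e2 : c.dd i * c.d i
      = ∑ μ : Fin D, ∑ ν : Fin D, (c.θb i ν * c.θ i μ) * (c.der μ * c.der ν) := by
    unfold Ctx.d Ctx.dd dOp ddOp; rw [Finset.sum_mul_sum]
    calc (∑ μ : Fin D, ∑ ν : Fin D, (c.θb i μ * c.der μ) * (c.θ i ν * c.der ν))
        = ∑ μ : Fin D, ∑ ν : Fin D, (c.θb i μ * c.θ i ν) * (c.der μ * c.der ν) :=
          Finset.sum_congr rfl fun μ _ => Finset.sum_congr rfl fun ν _ =>
            regroup (c.h_der_θ i μ ν)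
      _ = ∑ ν : Fin D, ∑ μ : Fin D, (c.θb i μ * c.θ i ν) * (c.der μ * c.der ν) :=
          Finset.sum_comm
      _ = ∑ μ : Fin D, ∑ ν : Fin D, (c.θb i ν * c.θ i μ) * (c.der ν * c.der μ) := rfl
      _ = ∑ μ : Fin D, ∑ ν : Fin D, (c.θb i ν * c.θ i μ) * (c.der μ * c.der ν) := by
          exact Finset.sum_congr rfl fun μ _ => Finset.sum_congr rfl fun ν _ => by
            rw [c.h_der_comm μ ν]
  rw [e1, e2, ← Finset.sum_add_distrib]
  unfold Ctx.box boxOp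
  refine Finset.sum_congr rfl fun μ _ => ?_
  rw [← Finset.sum_add_distrib]
  refine Finset.sum_congr rfl fun ν _ => ?_
  rw [← add_mul, c.h_mixed_same i μ ν, ← Algebra.smul_def]

lemma dd_d_same (i : Fin s) : c.dd i * c.d i = c.box - c.d i * c.dd i :=
  eq_sub_of_add_eq (by rw [add_comm]; exact c.anticomm i)


lemma tr_d_left {i j : Fin s} (hij : i ≠ j) :
    c.tr i j * c.d i = c.dd j - c.d i * c.tr i j := by
  have htr : c.tr i j = ∑ μ : Fin D, ∑ ν : Fin D, c.ηlow μ ν • (c.θb i μ * c.θb j ν) := by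
    unfold Ctx.tr trOp'; rw [if_neg hij]
  have key : ∀ μ ν lam : Fin D,
      (c.ηlow μ ν • (c.θb i μ * c.θb j ν)) * (c.θ i lam * c.der lam)
        = (c.ηup lam μ * c.ηlow μ ν) • (c.θb j ν * c.der lam)
          - c.ηlow μ ν • ((c.θ i lam * c.der lam) * (c.θb i μ * c.θb j ν)) := by
    intro μ ν lam
    rw [smul_mul_assoc, regroup ((c.h_mixed_diff i j hij lam ν).symm)]
    have hsplit : c.θb i μ * c.θ i lam = algebraMap ℝ R (c.ηup lam μ) - c.θ i lam * c.θb i μ :=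
      eq_sub_of_add_eq (by rw [add_comm]; exact c.h_mixed_same i lam μ)
    rw [hsplit, sub_mul, smul_sub]
    congr 1
    · rw [← Algebra.smul_def, smul_smul, mul_comm (c.ηlow μ ν)]
    · congr 1
      calc (c.θ i lam * c.θb i μ) * (c.θb j ν * c.der lam)
          = (c.θ i lam * c.θb i μ) * (c.der lam * c.θb j ν) := by rw [c.h_der_θb j lam ν]
        _ = (c.θ i lam * c.der lam) * (c.θb i μ * c.θb j ν) :=
            (regroup (c.h_der_θb i lam μ)).symm
  have expand : c.tr i j * c.d i
      = ∑ μ : Fin D, ∑ ν : Fin D, ∑ lam : Fin D,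
          (c.ηlow μ ν • (c.θb i μ * c.θb j ν)) * (c.θ i lam * c.der lam) := by
    rw [htr]
    show (∑ μ : Fin D, ∑ ν : Fin D, c.ηlow μ ν • (c.θb i μ * c.θb j ν)) *
        (∑ lam : Fin D, c.θ i lam * c.der lam) = _
    rw [Finset.sum_mul]
    exact Finset.sum_congr rfl fun μ _ => by rw [Finset.sum_mul_sum]
  have expand2 : c.d i * c.tr i j
      = ∑ μ : Fin D, ∑ ν : Fin D, ∑ lam : Fin D,
          c.ηlow μ ν • ((c.θ i lam * c.der lam) * (c.θb i μ * c.θb j ν)) := by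
    rw [htr]
    show (∑ lam : Fin D, c.θ i lam * c.der lam) *
        (∑ μ : Fin D, ∑ ν : Fin D, c.ηlow μ ν • (c.θb i μ * c.θb j ν)) = _
    rw [Finset.sum_mul]
    have step : ∀ lam : Fin D,
        (c.θ i lam * c.der lam) * (∑ μ : Fin D, ∑ ν : Fin D, c.ηlow μ ν • (c.θb i μ * c.θb j ν))
          = ∑ μ : Fin D, ∑ ν : Fin D,
              c.ηlow μ ν • ((c.θ i lam * c.der lam) * (c.θb i μ * c.θb j ν)) := by
      intro lam
      rw [Finset.mul_sum]
      exact Finset.sum_congr rfl fun μ _ => by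
        rw [Finset.mul_sum]
        exact Finset.sum_congr rfl fun ν _ => by rw [mul_smul_comm]
    calc (∑ lam : Fin D, (c.θ i lam * c.der lam) *
            (∑ μ : Fin D, ∑ ν : Fin D, c.ηlow μ ν • (c.θb i μ * c.θb j ν)))
        = ∑ lam : Fin D, ∑ μ : Fin D, ∑ ν : Fin D,
            c.ηlow μ ν • ((c.θ i lam * c.der lam) * (c.θb i μ * c.θb j ν)) :=
          Finset.sum_congr rfl fun lam _ => step lam
      _ = ∑ μ : Fin D, ∑ ν : Fin D, ∑ lam : Fin D,
            c.ηlow μ ν • ((c.θ i lam * c.der lam) * (c.θb i μ * c.θb j ν)) :=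
          sum_rot (fun lam μ ν =>
            c.ηlow μ ν • ((c.θ i lam * c.der lam) * (c.θb i μ * c.θb j ν)))
  have first : (∑ μ : Fin D, ∑ ν : Fin D, ∑ lam : Fin D,
      (c.ηup lam μ * c.ηlow μ ν) • (c.θb j ν * c.der lam)) = c.dd j := by
    rw [sum_rot (fun μ ν lam => (c.ηup lam μ * c.ηlow μ ν) • (c.θb j ν * c.der lam))]
    show (∑ ν : Fin D, ∑ lam : Fin D, ∑ μ : Fin D,
        (c.ηup lam μ * c.ηlow μ ν) • (c.θb j ν * c.der lam)) = c.dd j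
    unfold Ctx.dd ddOp
    refine Finset.sum_congr rfl fun ν _ => ?_
    have inner : ∀ lam : Fin D,
        (∑ μ : Fin D, (c.ηup lam μ * c.ηlow μ ν) • (c.θb j ν * c.der lam))
          = if lam = ν then c.θb j ν * c.der lam else 0 := by
      intro lam
      rw [← Finset.sum_smul, c.hη_inv lam ν]
      split <;> simp
    calc (∑ lam : Fin D, ∑ μ : Fin D, (c.ηup lam μ * c.ηlow μ ν) • (c.θb j ν * c.der lam))
        = ∑ lam : Fin D, if lam = ν then c.θb j ν * c.der lam else 0 :=
          Finset.sum_congr rfl fun lam _ => inner lam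
      _ = c.θb j ν * c.der ν := by simp
  rw [expand]
  calc (∑ μ : Fin D, ∑ ν : Fin D, ∑ lam : Fin D,
          (c.ηlow μ ν • (c.θb i μ * c.θb j ν)) * (c.θ i lam * c.der lam))
      = (∑ μ : Fin D, ∑ ν : Fin D, ∑ lam : Fin D,
          (c.ηup lam μ * c.ηlow μ ν) • (c.θb j ν * c.der lam))
        - ∑ μ : Fin D, ∑ ν : Fin D, ∑ lam : Fin D,
            c.ηlow μ ν • ((c.θ i lam * c.der lam) * (c.θb i μ * c.θb j ν)) := by
        rw [← Finset.sum_sub_distrib]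
        refine Finset.sum_congr rfl fun μ _ => ?_
        rw [← Finset.sum_sub_distrib]
        refine Finset.sum_congr rfl fun ν _ => ?_
        rw [← Finset.sum_sub_distrib]
        exact Finset.sum_congr rfl fun lam _ => key μ ν lam
    _ = c.dd j - c.d i * c.tr i j := by rw [first, expand2]

lemma tr_d_right {i j : Fin s} (hij : i ≠ j) :
    c.tr i j * c.d j = c.dd i - c.d j * c.tr i j := by
  have htr : c.tr i j = ∑ μ : Fin D, ∑ ν : Fin D, c.ηlow μ ν • (c.θb i μ * c.θb j ν) := by
    unfold Ctx.tr trOp'; rw [if_neg hij]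
  have key : ∀ μ ν lam : Fin D,
      (c.ηlow μ ν • (c.θb i μ * c.θb j ν)) * (c.θ j lam * c.der lam)
        = (c.ηlow μ ν * c.ηup ν lam) • (c.θb i μ * c.der lam)
          - c.ηlow μ ν • ((c.θ j lam * c.der lam) * (c.θb i μ * c.θb j ν)) := by
    intro μ ν lam
    have hsplit : c.θb j ν * c.θ j lam = algebraMap ℝ R (c.ηup lam ν) - c.θ j lam * c.θb j ν :=
      eq_sub_of_add_eq (by rw [add_comm]; exact c.h_mixed_same j lam ν)
    have hmain : (c.θb i μ * c.θb j ν) * (c.θ j lam * c.der lam)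
        = c.ηup lam ν • (c.θb i μ * c.der lam)
          - (c.θ j lam * c.der lam) * (c.θb i μ * c.θb j ν) := by
      have hX : (c.θ j lam * c.der lam) * (c.θb i μ * c.θb j ν)
          = c.θb i μ * ((c.θ j lam * c.θb j ν) * c.der lam) := by
        calc (c.θ j lam * c.der lam) * (c.θb i μ * c.θb j ν)
            = (c.θ j lam * c.θb i μ) * (c.der lam * c.θb j ν) := regroup (c.h_der_θb i lam μ)
          _ = (c.θ j lam * c.θb i μ) * (c.θb j ν * c.der lam) := by rw [c.h_der_θb j lam ν]
          _ = (c.θb i μ * c.θ j lam) * (c.θb j ν * c.der lam) := by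
              rw [c.h_mixed_diff j i (Ne.symm hij) lam μ]
          _ = c.θb i μ * ((c.θ j lam * c.θb j ν) * c.der lam) := by
              rw [mul_assoc, ← mul_assoc (c.θ j lam) (c.θb j ν) (c.der lam)]
      calc (c.θb i μ * c.θb j ν) * (c.θ j lam * c.der lam)
          = c.θb i μ * ((c.θb j ν * c.θ j lam) * c.der lam) := by
            rw [mul_assoc, ← mul_assoc (c.θb j ν) (c.θ j lam) (c.der lam)]
        _ = c.θb i μ * ((algebraMap ℝ R (c.ηup lam ν) - c.θ j lam * c.θb j ν) * c.der lam) := by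
            rw [hsplit]
        _ = c.θb i μ * (algebraMap ℝ R (c.ηup lam ν) * c.der lam)
              - c.θb i μ * ((c.θ j lam * c.θb j ν) * c.der lam) := by
            rw [sub_mul, mul_sub]
        _ = c.ηup lam ν • (c.θb i μ * c.der lam)
              - (c.θ j lam * c.der lam) * (c.θb i μ * c.θb j ν) := by
            rw [← Algebra.smul_def, mul_smul_comm, hX]
    rw [smul_mul_assoc, hmain, smul_sub, smul_smul]
    congr 2
    rw [c.hη_symm lam ν]
  have expand : c.tr i j * c.d j
      = ∑ μ : Fin D, ∑ ν : Fin D, ∑ lam : Fin D,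
          (c.ηlow μ ν • (c.θb i μ * c.θb j ν)) * (c.θ j lam * c.der lam) := by
    rw [htr]
    show (∑ μ : Fin D, ∑ ν : Fin D, c.ηlow μ ν • (c.θb i μ * c.θb j ν)) *
        (∑ lam : Fin D, c.θ j lam * c.der lam) = _
    rw [Finset.sum_mul]
    exact Finset.sum_congr rfl fun μ _ => by rw [Finset.sum_mul_sum]
  have expand2 : c.d j * c.tr i j
      = ∑ μ : Fin D, ∑ ν : Fin D, ∑ lam : Fin D,
          c.ηlow μ ν • ((c.θ j lam * c.der lam) * (c.θb i μ * c.θb j ν)) := by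
    rw [htr]
    show (∑ lam : Fin D, c.θ j lam * c.der lam) *
        (∑ μ : Fin D, ∑ ν : Fin D, c.ηlow μ ν • (c.θb i μ * c.θb j ν)) = _
    rw [Finset.sum_mul]
    have step : ∀ lam : Fin D,
        (c.θ j lam * c.der lam) * (∑ μ : Fin D, ∑ ν : Fin D, c.ηlow μ ν • (c.θb i μ * c.θb j ν))
          = ∑ μ : Fin D, ∑ ν : Fin D,
              c.ηlow μ ν • ((c.θ j lam * c.der lam) * (c.θb i μ * c.θb j ν)) := by
      intro lam
      rw [Finset.mul_sum]
      exact Finset.sum_congr rfl fun μ _ => by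
        rw [Finset.mul_sum]
        exact Finset.sum_congr rfl fun ν _ => by rw [mul_smul_comm]
    calc (∑ lam : Fin D, (c.θ j lam * c.der lam) *
            (∑ μ : Fin D, ∑ ν : Fin D, c.ηlow μ ν • (c.θb i μ * c.θb j ν)))
        = ∑ lam : Fin D, ∑ μ : Fin D, ∑ ν : Fin D,
            c.ηlow μ ν • ((c.θ j lam * c.der lam) * (c.θb i μ * c.θb j ν)) :=
          Finset.sum_congr rfl fun lam _ => step lam
      _ = ∑ μ : Fin D, ∑ ν : Fin D, ∑ lam : Fin D,
            c.ηlow μ ν • ((c.θ j lam * c.der lam) * (c.θb i μ * c.θb j ν)) :=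
          sum_rot (fun lam μ ν =>
            c.ηlow μ ν • ((c.θ j lam * c.der lam) * (c.θb i μ * c.θb j ν)))
  have first : (∑ μ : Fin D, ∑ ν : Fin D, ∑ lam : Fin D,
      (c.ηlow μ ν * c.ηup ν lam) • (c.θb i μ * c.der lam)) = c.dd i := by
    rw [sum_swap23 (fun μ ν lam => (c.ηlow μ ν * c.ηup ν lam) • (c.θb i μ * c.der lam))]
    unfold Ctx.dd ddOp
    refine Finset.sum_congr rfl fun μ _ => ?_
    have inner : ∀ lam : Fin D,
        (∑ ν : Fin D, (c.ηlow μ ν * c.ηup ν lam) • (c.θb i μ * c.der lam))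
          = if μ = lam then c.θb i μ * c.der lam else 0 := by
      intro lam
      rw [← Finset.sum_smul, c.hη_inv' μ lam]
      split <;> simp
    calc (∑ lam : Fin D, ∑ ν : Fin D, (c.ηlow μ ν * c.ηup ν lam) • (c.θb i μ * c.der lam))
        = ∑ lam : Fin D, if μ = lam then c.θb i μ * c.der lam else 0 :=
          Finset.sum_congr rfl fun lam _ => inner lam
      _ = c.θb i μ * c.der μ := by simp
  rw [expand]
  calc (∑ μ : Fin D, ∑ ν : Fin D, ∑ lam : Fin D,
          (c.ηlow μ ν • (c.θb i μ * c.θb j ν)) * (c.θ j lam * c.der lam))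
      = (∑ μ : Fin D, ∑ ν : Fin D, ∑ lam : Fin D,
          (c.ηlow μ ν * c.ηup ν lam) • (c.θb i μ * c.der lam))
        - ∑ μ : Fin D, ∑ ν : Fin D, ∑ lam : Fin D,
            c.ηlow μ ν • ((c.θ j lam * c.der lam) * (c.θb i μ * c.θb j ν)) := by
        rw [← Finset.sum_sub_distrib]
        refine Finset.sum_congr rfl fun μ _ => ?_
        rw [← Finset.sum_sub_distrib]
        refine Finset.sum_congr rfl fun ν _ => ?_
        rw [← Finset.sum_sub_distrib]
        exact Finset.sum_congr rfl fun lam _ => key μ ν lam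
    _ = c.dd i - c.d j * c.tr i j := by rw [first, expand2]


lemma S1_d (k : Fin s) : (∑ i : Fin s, c.d i * c.dd i) * c.d k
    = c.d k * c.box + c.d k * ∑ i : Fin s, c.d i * c.dd i := by
  rw [Finset.sum_mul]
  have hpt : ∀ i' : Fin s, (c.d i' * c.dd i') * c.d k
      = c.d k * (c.d i' * c.dd i') + (if i' = k then c.d k * c.box else 0) := by
    intro i'
    rcases eq_or_ne i' k with rfl | h
    · rw [if_pos rfl]
      have hz : c.d i' * (c.d i' * c.dd i') = 0 := by rw [← mul_assoc, c.d_sq, zero_mul]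
      rw [mul_assoc, c.dd_d_same i', mul_sub, hz, sub_zero, zero_add]
    · rw [if_neg h, add_zero, mul_assoc, c.comm_dd_d h, ← mul_assoc, c.comm_d_d i' k, mul_assoc]
  calc (∑ i' : Fin s, (c.d i' * c.dd i') * c.d k)
      = ∑ i' : Fin s, (c.d k * (c.d i' * c.dd i') + (if i' = k then c.d k * c.box else 0)) :=
        Finset.sum_congr rfl fun i' _ => hpt i'
    _ = (∑ i' : Fin s, c.d k * (c.d i' * c.dd i'))
          + ∑ i' : Fin s, (if i' = k then c.d k * c.box else 0) := Finset.sum_add_distrib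
    _ = c.d k * (∑ i' : Fin s, c.d i' * c.dd i') + c.d k * c.box := by
        rw [← Finset.mul_sum]; congr 1; simp
    _ = c.d k * c.box + c.d k * (∑ i' : Fin s, c.d i' * c.dd i') := add_comm _ _

lemma S2_d (k : Fin s) : (∑ i : Fin s, ∑ j : Fin s, c.d i * c.d j * c.tr i j) * c.d k
    = (∑ i : Fin s, ∑ j : Fin s, c.d i * c.d j * c.d k * c.tr i j)
      + (c.d k * (∑ i : Fin s, c.d i * c.dd i) + c.d k * (∑ i : Fin s, c.d i * c.dd i)) := by
  have hpt : ∀ i j : Fin s, (c.d i * c.d j * c.tr i j) * c.d k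
      = c.d i * c.d j * c.d k * c.tr i j
        + ((if i = k then c.d i * c.d j * c.dd j else 0)
          + (if j = k then c.d i * c.d j * c.dd i else 0)) := by
    intro i j
    rcases eq_or_ne i j with rfl | hij
    · have ht : c.tr i i = 0 := by unfold Ctx.tr trOp'; rw [if_pos rfl]
      have hdz : c.d i * c.d i = 0 := c.d_sq i
      simp [ht, hdz]
    · rcases eq_or_ne i k with rfl | hik
      · rw [if_pos rfl, if_neg (Ne.symm hij), add_zero]
        have h1 : c.d i * c.d j * c.d i = 0 := by
          rw [mul_assoc, c.comm_d_d j i, ← mul_assoc, c.d_sq, zero_mul]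
        rw [mul_assoc (c.d i * c.d j), c.tr_d_left hij, mul_sub,
          ← mul_assoc (c.d i * c.d j) (c.d i) (c.tr i j), h1, zero_mul]
        simp
      · rcases eq_or_ne j k with rfl | hjk
        · rw [if_neg hik, if_pos rfl, zero_add]
          have h1 : c.d i * c.d j * c.d j = 0 := by rw [mul_assoc, c.d_sq, mul_zero]
          rw [mul_assoc (c.d i * c.d j), c.tr_d_right hij, mul_sub,
            ← mul_assoc (c.d i * c.d j) (c.d j) (c.tr i j), h1, zero_mul]
          simp
        · rw [if_neg hik, if_neg hjk, add_zero, add_zero, mul_assoc,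
            c.comm_tr_d (Ne.symm hik) (Ne.symm hjk), ← mul_assoc]
  have hT1 : (∑ i : Fin s, ∑ j : Fin s, if i = k then c.d i * c.d j * c.dd j else 0)
      = c.d k * ∑ i : Fin s, c.d i * c.dd i := by
    have step : ∀ i : Fin s, (∑ j : Fin s, if i = k then c.d i * c.d j * c.dd j else 0)
        = if i = k then ∑ j : Fin s, c.d i * c.d j * c.dd j else 0 := by
      intro i; split <;> simp
    calc (∑ i : Fin s, ∑ j : Fin s, if i = k then c.d i * c.d j * c.dd j else 0)
        = ∑ i : Fin s, if i = k then ∑ j : Fin s, c.d i * c.d j * c.dd j else 0 :=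
          Finset.sum_congr rfl fun i _ => step i
      _ = ∑ j : Fin s, c.d k * c.d j * c.dd j := by simp
      _ = ∑ j : Fin s, c.d k * (c.d j * c.dd j) := by
          exact Finset.sum_congr rfl fun j _ => by rw [mul_assoc]
      _ = c.d k * ∑ j : Fin s, c.d j * c.dd j := (Finset.mul_sum _ _ _).symm
  have hT2 : (∑ i : Fin s, ∑ j : Fin s, if j = k then c.d i * c.d j * c.dd i else 0)
      = c.d k * ∑ i : Fin s, c.d i * c.dd i := by
    calc (∑ i : Fin s, ∑ j : Fin s, if j = k then c.d i * c.d j * c.dd i else 0)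
        = ∑ i : Fin s, c.d i * c.d k * c.dd i := by
          refine Finset.sum_congr rfl fun i _ => ?_; simp
      _ = ∑ i : Fin s, c.d k * (c.d i * c.dd i) := by
          refine Finset.sum_congr rfl fun i _ => ?_
          rw [c.comm_d_d i k, mul_assoc]
      _ = c.d k * ∑ i : Fin s, c.d i * c.dd i := (Finset.mul_sum _ _ _).symm
  calc (∑ i : Fin s, ∑ j : Fin s, c.d i * c.d j * c.tr i j) * c.d k
      = ∑ i : Fin s, ∑ j : Fin s, (c.d i * c.d j * c.tr i j) * c.d k := by
        rw [Finset.sum_mul]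
        exact Finset.sum_congr rfl fun i _ => by rw [Finset.sum_mul]
    _ = ∑ i : Fin s, ∑ j : Fin s, (c.d i * c.d j * c.d k * c.tr i j
          + ((if i = k then c.d i * c.d j * c.dd j else 0)
            + (if j = k then c.d i * c.d j * c.dd i else 0))) :=
        Finset.sum_congr rfl fun i _ => Finset.sum_congr rfl fun j _ => hpt i j
    _ = (∑ i : Fin s, ∑ j : Fin s, c.d i * c.d j * c.d k * c.tr i j)
          + ((∑ i : Fin s, ∑ j : Fin s, if i = k then c.d i * c.d j * c.dd j else 0)
            + (∑ i : Fin s, ∑ j : Fin s, if j = k then c.d i * c.d j * c.dd i else 0)) := by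
        simp only [Finset.sum_add_distrib]
    _ = _ := by rw [hT1, hT2]

lemma lab_d (k : Fin s) : labOp c.ηup c.ηlow c.θ c.θb c.der * c.d k
    = (2:ℝ)⁻¹ • ∑ i : Fin s, ∑ j : Fin s, c.d i * c.d j * c.d k * c.tr i j := by
  show (c.box - (∑ i : Fin s, c.d i * c.dd i)
      + (2:ℝ)⁻¹ • (∑ i : Fin s, ∑ j : Fin s, c.d i * c.d j * c.tr i j)) * c.d k = _
  rw [add_mul, sub_mul, smul_mul_assoc, c.comm_box_d, c.S1_d k, c.S2_d k, smul_add]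
  have h2 : (2:ℝ)⁻¹ • (c.d k * (∑ i : Fin s, c.d i * c.dd i)
      + c.d k * (∑ i : Fin s, c.d i * c.dd i)) = c.d k * (∑ i : Fin s, c.d i * c.dd i) := by
    rw [← two_smul ℝ, smul_smul]; norm_num
  rw [h2]
  abel


lemma part1 (ε : Fin s → R) :
    labOp c.ηup c.ηlow c.θ c.θb c.der * (∑ k : Fin s, dOp c.θ c.der k * ε k)
      = (2:ℝ)⁻¹ • (∑ i : Fin s, ∑ j : Fin s, ∑ k : Fin s,
          dOp c.θ c.der i * (dOp c.θ c.der j * (dOp c.θ c.der k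
            * (trOp' c.ηlow c.θb i j * ε k)))) := by
  show labOp c.ηup c.ηlow c.θ c.θb c.der * (∑ k : Fin s, c.d k * ε k)
      = (2:ℝ)⁻¹ • (∑ i : Fin s, ∑ j : Fin s, ∑ k : Fin s,
          c.d i * (c.d j * (c.d k * (c.tr i j * ε k))))
  calc labOp c.ηup c.ηlow c.θ c.θb c.der * (∑ k : Fin s, c.d k * ε k)
      = ∑ k : Fin s, labOp c.ηup c.ηlow c.θ c.θb c.der * (c.d k * ε k) :=
        Finset.mul_sum _ _ _
    _ = ∑ k : Fin s, (labOp c.ηup c.ηlow c.θ c.θb c.der * c.d k) * ε k := by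
        exact Finset.sum_congr rfl fun k _ => by rw [← mul_assoc]
    _ = ∑ k : Fin s, ((2:ℝ)⁻¹ • ∑ i : Fin s, ∑ j : Fin s,
          c.d i * c.d j * c.d k * c.tr i j) * ε k :=
        Finset.sum_congr rfl fun k _ => by rw [c.lab_d k]
    _ = ∑ k : Fin s, (2:ℝ)⁻¹ • ((∑ i : Fin s, ∑ j : Fin s,
          c.d i * c.d j * c.d k * c.tr i j) * ε k) := by
        simp only [smul_mul_assoc]
    _ = (2:ℝ)⁻¹ • ∑ k : Fin s, ((∑ i : Fin s, ∑ j : Fin s,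
          c.d i * c.d j * c.d k * c.tr i j) * ε k) := by rw [Finset.smul_sum]
    _ = (2:ℝ)⁻¹ • ∑ k : Fin s, ∑ i : Fin s, ∑ j : Fin s,
          (c.d i * c.d j * c.d k * c.tr i j) * ε k := by
        congr 1
        refine Finset.sum_congr rfl fun k _ => ?_
        rw [Finset.sum_mul]
        exact Finset.sum_congr rfl fun i _ => by rw [Finset.sum_mul]
    _ = (2:ℝ)⁻¹ • ∑ k : Fin s, ∑ i : Fin s, ∑ j : Fin s,
          c.d i * (c.d j * (c.d k * (c.tr i j * ε k))) := by
        simp only [mul_assoc]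
    _ = (2:ℝ)⁻¹ • ∑ i : Fin s, ∑ j : Fin s, ∑ k : Fin s,
          c.d i * (c.d j * (c.d k * (c.tr i j * ε k))) := by
        rw [sum_rot (fun k i j => c.d i * (c.d j * (c.d k * (c.tr i j * ε k))))]

lemma part2 (ε : Fin s → R)
    (hcon : ∀ i j k : Fin s,
      (6 : ℝ)⁻¹ • (c.tr i j * ε k + c.tr j i * ε k
        + c.tr j k * ε i + c.tr k j * ε i
        + c.tr k i * ε j + c.tr i k * ε j) = 0) :
    labOp c.ηup c.ηlow c.θ c.θb c.der * (∑ k : Fin s, dOp c.θ c.der k * ε k) = 0 := by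
  rw [c.part1 ε]
  suffices h : (∑ i : Fin s, ∑ j : Fin s, ∑ k : Fin s,
      dOp c.θ c.der i * (dOp c.θ c.der j * (dOp c.θ c.der k
        * (trOp' c.ηlow c.θb i j * ε k)))) = 0 by rw [h, smul_zero]
  have hcon' : ∀ i j k : Fin s,
      c.tr i j * ε k + c.tr j i * ε k + c.tr j k * ε i + c.tr k j * ε i
        + c.tr k i * ε j + c.tr i k * ε j = 0 := fun i j k =>
    smul_cancel' (6:ℝ)⁻¹ (by norm_num) (hcon i j k)
  set Q : Fin s → Fin s → Fin s → R := fun a b e => c.d a * c.d b * c.d e with hQdef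
  have hQ12 : ∀ a b e, Q a b e = Q b a e := by
    intro a b e; simp only [hQdef]; rw [c.comm_d_d a b]
  have hQ23 : ∀ a b e, Q a b e = Q a e b := by
    intro a b e; simp only [hQdef]; rw [mul_assoc, c.comm_d_d b e, ← mul_assoc]
  have hQ13 : ∀ a b e, Q a b e = Q e b a := fun a b e =>
    (hQ12 a b e).trans ((hQ23 b a e).trans (hQ12 b e a))
  have hQrot : ∀ a b e, Q a b e = Q b e a := fun a b e =>
    (hQ12 a b e).trans (hQ23 b a e)
  have hQrot2 : ∀ a b e, Q a b e = Q e a b := fun a b e =>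
    (hQrot a b e).trans (hQrot b e a)
  have hform : (∑ i : Fin s, ∑ j : Fin s, ∑ k : Fin s,
      dOp c.θ c.der i * (dOp c.θ c.der j * (dOp c.θ c.der k
        * (trOp' c.ηlow c.θb i j * ε k))))
      = ∑ i : Fin s, ∑ j : Fin s, ∑ k : Fin s, Q i j k * (c.tr i j * ε k) := by
    refine Finset.sum_congr rfl fun i _ => Finset.sum_congr rfl fun j _ =>
      Finset.sum_congr rfl fun k _ => ?_
    show c.d i * (c.d j * (c.d k * (c.tr i j * ε k))) = Q i j k * (c.tr i j * ε k)
    simp only [hQdef, mul_assoc]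
  rw [hform]
  set S : R := ∑ i : Fin s, ∑ j : Fin s, ∑ k : Fin s, Q i j k * (c.tr i j * ε k) with hSdef
  have e2 : (∑ i : Fin s, ∑ j : Fin s, ∑ k : Fin s, Q i j k * (c.tr j i * ε k)) = S := by
    rw [sum_swap12 (fun i j k => Q i j k * (c.tr j i * ε k))]
    exact Finset.sum_congr rfl fun i _ => Finset.sum_congr rfl fun j _ =>
      Finset.sum_congr rfl fun k _ => by rw [hQ12 j i k]
  have e3 : (∑ i : Fin s, ∑ j : Fin s, ∑ k : Fin s, Q i j k * (c.tr j k * ε i)) = S := by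
    rw [sum_rot (fun i j k => Q i j k * (c.tr j k * ε i))]
    exact Finset.sum_congr rfl fun i _ => Finset.sum_congr rfl fun j _ =>
      Finset.sum_congr rfl fun k _ => by rw [hQrot k i j]
  have e4 : (∑ i : Fin s, ∑ j : Fin s, ∑ k : Fin s, Q i j k * (c.tr k j * ε i)) = S := by
    rw [sum_rot (fun i j k => Q i j k * (c.tr k j * ε i)),
      sum_swap12 (fun a b e => Q e a b * (c.tr b a * ε e))]
    exact Finset.sum_congr rfl fun i _ => Finset.sum_congr rfl fun j _ =>
      Finset.sum_congr rfl fun k _ => by rw [hQ13 k j i]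
  have e5 : (∑ i : Fin s, ∑ j : Fin s, ∑ k : Fin s, Q i j k * (c.tr k i * ε j)) = S := by
    rw [sum_rot (fun i j k => Q i j k * (c.tr k i * ε j)),
      sum_rot (fun a b e => Q e a b * (c.tr b e * ε a))]
    exact Finset.sum_congr rfl fun i _ => Finset.sum_congr rfl fun j _ =>
      Finset.sum_congr rfl fun k _ => by rw [hQrot2 j k i]
  have e6 : (∑ i : Fin s, ∑ j : Fin s, ∑ k : Fin s, Q i j k * (c.tr i k * ε j)) = S := by
    rw [sum_swap23 (fun i j k => Q i j k * (c.tr i k * ε j))]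
    exact Finset.sum_congr rfl fun i _ => Finset.sum_congr rfl fun j _ =>
      Finset.sum_congr rfl fun k _ => by rw [hQ23 i k j]
  have h6 : (6:ℝ) • S = 0 := by
    have hsum : (6:ℝ) • S = S + S + S + S + S + S := by
      have h : (6:ℝ) = 1+1+1+1+1+1 := by norm_num
      rw [h]; simp [add_smul]
    calc (6:ℝ) • S = S + S + S + S + S + S := hsum
      _ = S + (∑ i : Fin s, ∑ j : Fin s, ∑ k : Fin s, Q i j k * (c.tr j i * ε k))
            + (∑ i : Fin s, ∑ j : Fin s, ∑ k : Fin s, Q i j k * (c.tr j k * ε i))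
            + (∑ i : Fin s, ∑ j : Fin s, ∑ k : Fin s, Q i j k * (c.tr k j * ε i))
            + (∑ i : Fin s, ∑ j : Fin s, ∑ k : Fin s, Q i j k * (c.tr k i * ε j))
            + (∑ i : Fin s, ∑ j : Fin s, ∑ k : Fin s, Q i j k * (c.tr i k * ε j)) := by
          rw [e2, e3, e4, e5, e6]
      _ = ∑ i : Fin s, ∑ j : Fin s, ∑ k : Fin s,
            Q i j k * (c.tr i j * ε k + c.tr j i * ε k + c.tr j k * ε i
              + c.tr k j * ε i + c.tr k i * ε j + c.tr i k * ε j) := by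
          rw [hSdef]
          simp only [← Finset.sum_add_distrib, ← mul_add]
      _ = 0 := by
          rw [Finset.sum_eq_zero]
          intro i _
          rw [Finset.sum_eq_zero]
          intro j _
          rw [Finset.sum_eq_zero]
          intro k _
          rw [hcon' i j k, mul_zero]
  exact smul_cancel' (6:ℝ) (by norm_num) h6

end Ctx



/-- the gauge variation of the Labastida tensor under `δφ = Σₖ dₖ εₖ` is
`𝖥(δφ) = ½ dᵢ dⱼ dₖ (Tr_{ij} εₖ)` (all non-triple-curl-of-trace terms cancel); in particular,
if the strength-one symmetrized trace constraint `Tr_{(ij} ε_{k)} = 0` holds, the gauge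
variation of the Labastida tensor vanishes, i.e. the Labastida field equation is gauge
invariant. -/
theorem labastida_gauge_variation
    {R : Type*} [Ring R] [Algebra ℝ R] {D s : ℕ}
    (ηup ηlow : Fin D → Fin D → ℝ)
    (hη_symm : ∀ μ ν, ηup μ ν = ηup ν μ)
    (hη_inv : ∀ μ ν, (∑ lam : Fin D, ηup μ lam * ηlow lam ν) = if μ = ν then 1 else 0)
    (θ θb : Fin s → Fin D → R) (der : Fin D → R)
    (h_mixed_same : ∀ (i : Fin s) (μ ν : Fin D),
      θ i μ * θb i ν + θb i ν * θ i μ = algebraMap ℝ R (ηup μ ν))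
    (h_mixed_diff : ∀ (i j : Fin s), i ≠ j → ∀ (μ ν : Fin D),
      θ i μ * θb j ν = θb j ν * θ i μ)
    (h_θθ_same : ∀ (i : Fin s) (μ ν : Fin D), θ i μ * θ i ν = -(θ i ν * θ i μ))
    (h_θθ_diff : ∀ (i j : Fin s), i ≠ j → ∀ (μ ν : Fin D), θ i μ * θ j ν = θ j ν * θ i μ)
    (h_θbθb_same : ∀ (i : Fin s) (μ ν : Fin D), θb i μ * θb i ν = -(θb i ν * θb i μ))
    (h_θbθb_diff : ∀ (i j : Fin s), i ≠ j → ∀ (μ ν : Fin D),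
      θb i μ * θb j ν = θb j ν * θb i μ)
    (h_der_comm : ∀ μ ν, der μ * der ν = der ν * der μ)
    (h_der_θ : ∀ (i : Fin s) (μ ν : Fin D), der μ * θ i ν = θ i ν * der μ)
    (h_der_θb : ∀ (i : Fin s) (μ ν : Fin D), der μ * θb i ν = θb i ν * der μ)
    (ε : Fin s → R) :
    labOp ηup ηlow θ θb der * (∑ k : Fin s, dOp θ der k * ε k)
      = (2 : ℝ)⁻¹ • (∑ i : Fin s, ∑ j : Fin s, ∑ k : Fin s,
          dOp θ der i * (dOp θ der j * (dOp θ der k * (trOp' ηlow θb i j * ε k)))) ∧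
    ((∀ i j k : Fin s,
        (6 : ℝ)⁻¹ • (trOp' ηlow θb i j * ε k + trOp' ηlow θb j i * ε k
          + trOp' ηlow θb j k * ε i + trOp' ηlow θb k j * ε i
          + trOp' ηlow θb k i * ε j + trOp' ηlow θb i k * ε j) = 0) →
      labOp ηup ηlow θ θb der * (∑ k : Fin s, dOp θ der k * ε k) = 0) := by
  refine ⟨?_, fun hcon => ?_⟩
  · exact (Ctx.mk ηup ηlow θ θb der hη_symm hη_inv h_mixed_same h_mixed_diff h_θθ_same
      h_θθ_diff h_θbθb_same h_θbθb_diff h_der_comm h_der_θ h_der_θb).part1 ε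
  · exact (Ctx.mk ηup ηlow θ θb der hη_symm hη_inv h_mixed_same h_mixed_diff h_θθ_same
      h_θθ_diff h_θbθb_same h_θbθb_diff h_der_comm h_der_θ h_der_θb).part2 ε hcon

end Stmt10
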